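/- arXiv:2205.11883 — 2 statements merged into one kernel-verified Lean document; each statement's English description precedes it below -/
import Mathlib

section
/- Let M be a full subcategory of Mod-R closed under submodules and let M ∈ M. Then there exists a left almost split morphism f : M → M̄ in M that is not a monomorphism if and only if there exists a left almost split morphism g : M → M̄' in M that is an epimorphism. Moreover, every strong left almost split morphism in M with domain M is either a monomorphism or an epimorphism. -/
/-!
Factor `f : M ⟶ Mb` as the epimorphism `e : M ⟶ image f` followed by the monomorphism
`m : image f ⟶ Mb`; closure under submodules puts `image f` in the subcategory. If `f` is left
almost split and not mono, then `e` is not split mono and inherits the factorizations of `f`.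
An epimorphic left almost split morphism cannot be mono, as it would be an isomorphism.
If `f` is strong left almost split and not mono, pick `h` with `f ≫ h = e`; then
`f ≫ (h ≫ m) = f = f ≫ 𝟙`, so uniqueness forces `h ≫ m = 𝟙`, and `f = e ≫ m` is epi.
-/

open CategoryTheory Limits

universe u

namespace Paper

variable {R : Type u} [Ring R]

/-- `f` is a left almost split morphism in the full subcategory of objects satisfying `P`. -/
def LeftAlmostSplitIn {C : Type*} [Category C] (P : C → Prop) {X Y : C} (f : X ⟶ Y) :
    Prop :=
  ¬ IsSplitMono f ∧
    ∀ ⦃Z : C⦄, P Z → ∀ g : X ⟶ Z, ¬ IsSplitMono g → ∃ h : Y ⟶ Z, f ≫ h = g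

/-- A strong left almost split morphism: the factorization is moreover unique. -/
def StrongLeftAlmostSplitIn {C : Type*} [Category C] (P : C → Prop) {X Y : C}
    (f : X ⟶ Y) : Prop :=
  ¬ IsSplitMono f ∧
    ∀ ⦃Z : C⦄, P Z → ∀ g : X ⟶ Z, ¬ IsSplitMono g → ∃! h : Y ⟶ Z, f ≫ h = g

section General

variable {C : Type*} [Category C] {P : C → Prop} {X I Y : C}

theorem not_isSplitMono_of_not_mono_comp {e : X ⟶ I} {m : I ⟶ Y} [Mono m]
    (h : ¬ Mono (e ≫ m)) : ¬ IsSplitMono e :=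
  fun _ => h (mono_comp e m)

theorem LeftAlmostSplitIn.of_comp {e : X ⟶ I} {m : I ⟶ Y}
    (hf : LeftAlmostSplitIn P (e ≫ m)) (he : ¬ IsSplitMono e) : LeftAlmostSplitIn P e := by
  refine ⟨he, fun Z hZ g hg => ?_⟩
  obtain ⟨h, hh⟩ := hf.2 hZ g hg
  exact ⟨m ≫ h, by rw [← Category.assoc, hh]⟩

theorem LeftAlmostSplitIn.not_mono_of_epi [Balanced C] {f : X ⟶ Y} [Epi f]
    (hf : LeftAlmostSplitIn P f) : ¬ Mono f := fun _ =>
  haveI := isIso_of_mono_of_epi f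
  hf.1 inferInstance

theorem StrongLeftAlmostSplitIn.isSplitEpi_of_comp {e : X ⟶ I} {m : I ⟶ Y}
    (hf : StrongLeftAlmostSplitIn P (e ≫ m)) (hI : P I) (hY : P Y) (he : ¬ IsSplitMono e) :
    IsSplitEpi m := by
  obtain ⟨h, hh, -⟩ := hf.2 hI e he
  obtain ⟨_, -, huniq⟩ := hf.2 hY (e ≫ m) hf.1
  have hhm : h ≫ m = 𝟙 Y :=
    (huniq _ (by dsimp only; rw [← Category.assoc, hh])).trans
      (huniq _ (Category.comp_id _)).symm
  exact IsSplitEpi.mk' ⟨h, hhm⟩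

end General

theorem las_mono_or_epi_general (Mcl : Set (ModuleCat.{u} R))
    (hsub : ∀ {X Y : ModuleCat.{u} R}, X ∈ Mcl → ∀ f : Y ⟶ X, Mono f → Y ∈ Mcl)
    (M : ModuleCat.{u} R) :
    ((∃ (Mb : ModuleCat.{u} R) (f : M ⟶ Mb), Mb ∈ Mcl ∧
        LeftAlmostSplitIn (· ∈ Mcl) f ∧ ¬ Mono f) ↔
      (∃ (Mb : ModuleCat.{u} R) (g : M ⟶ Mb), Mb ∈ Mcl ∧
        LeftAlmostSplitIn (· ∈ Mcl) g ∧ Epi g)) ∧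
    (∀ (Mb : ModuleCat.{u} R) (f : M ⟶ Mb), Mb ∈ Mcl →
      StrongLeftAlmostSplitIn (· ∈ Mcl) f → Mono f ∨ Epi f) := by
  have image_mem {Mb : ModuleCat.{u} R} (f : M ⟶ Mb) (hMb : Mb ∈ Mcl) : image f ∈ Mcl :=
    hsub hMb (image.ι f) inferInstance
  refine ⟨⟨?_, ?_⟩, ?_⟩
  · rintro ⟨Mb, f, hMb, hf, hnm⟩
    rw [← image.fac f] at hf hnm
    exact ⟨image f, factorThruImage f, image_mem f hMb,
      hf.of_comp (not_isSplitMono_of_not_mono_comp hnm), inferInstance⟩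
  · rintro ⟨Mb, g, hMb, hg, _⟩
    exact ⟨Mb, g, hMb, hg, hg.not_mono_of_epi⟩
  · intro Mb f hMb hf
    refine or_iff_not_imp_left.2 fun hnm => ?_
    rw [← image.fac f] at hf hnm ⊢
    have := hf.isSplitEpi_of_comp (image_mem f hMb) hMb (not_isSplitMono_of_not_mono_comp hnm)
    exact epi_comp _ _

theorem las_mono_or_epi (Mcl : Set (ModuleCat.{u} R))
    (hsub : ∀ {X Y : ModuleCat.{u} R}, X ∈ Mcl → ∀ f : Y ⟶ X, Mono f → Y ∈ Mcl)
    (M : ModuleCat.{u} R) (hM : M ∈ Mcl) :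
    ((∃ (Mb : ModuleCat.{u} R) (f : M ⟶ Mb), Mb ∈ Mcl ∧
        LeftAlmostSplitIn (· ∈ Mcl) f ∧ ¬ Mono f) ↔
      (∃ (Mb : ModuleCat.{u} R) (g : M ⟶ Mb), Mb ∈ Mcl ∧
        LeftAlmostSplitIn (· ∈ Mcl) g ∧ Epi g)) ∧
    (∀ (Mb : ModuleCat.{u} R) (f : M ⟶ Mb), Mb ∈ Mcl →
      StrongLeftAlmostSplitIn (· ∈ Mcl) f → Mono f ∨ Epi f) :=
  las_mono_or_epi_general Mcl hsub M

end Paper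
end

section
/- Let (T, F) be a hereditary torsion pair in Mod-R, i.e., a torsion pair whose torsion class T is closed under submodules. Then every torsion-free, almost torsion module F₀ ∈ F is uniform: for any two nonzero submodules M₁, M₂ of F₀ one has M₁ ∩ M₂ ≠ 0. Consequently the injective envelope E(F₀) is indecomposable. -/
open CategoryTheory Limits

universe u

namespace Paper

variable {R : Type u} [Ring R]

/-- A torsion pair `(T, F)` in the category of `R`-modules: Hom(T, F) = 0 and every
module fits in a short exact sequence with torsion kernel and torsion-free cokernel. -/
structure TorsionPair (R : Type u) [Ring R] where
  tors : Set (ModuleCat.{u} R)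
  free : Set (ModuleCat.{u} R)
  isoClosed_tors : ∀ {X Y : ModuleCat.{u} R}, (X ≅ Y) → X ∈ tors → Y ∈ tors
  isoClosed_free : ∀ {X Y : ModuleCat.{u} R}, (X ≅ Y) → X ∈ free → Y ∈ free
  hom_vanish : ∀ {T F : ModuleCat.{u} R}, T ∈ tors → F ∈ free → ∀ f : T ⟶ F, f = 0
  exists_ses : ∀ X : ModuleCat.{u} R, ∃ (A B : ModuleCat.{u} R) (i : A ⟶ X) (p : X ⟶ B)
    (w : i ≫ p = 0), A ∈ tors ∧ B ∈ free ∧ (ShortComplex.mk i p w).ShortExact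

/-- A nonzero module is almost torsion-free if every proper submodule is torsion-free
(ATF1) and every short exact sequence `0 → A → B → T₀ → 0` with `B` torsion has `A`
torsion (ATF2). -/
def AlmostTorsionFree (tors free : Set (ModuleCat.{u} R)) (T₀ : ModuleCat.{u} R) : Prop :=
  Nontrivial T₀ ∧
  (∀ N : Submodule R T₀, N ≠ ⊤ → ModuleCat.of R N ∈ free) ∧
  (∀ (A B : ModuleCat.{u} R) (i : A ⟶ B) (p : B ⟶ T₀) (w : i ≫ p = 0),
    (ShortComplex.mk i p w).ShortExact → B ∈ tors → A ∈ tors)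

/-- A nonzero module is almost torsion if every proper quotient is torsion (AT1) and
every short exact sequence `0 → F₀ → A → B → 0` with `A` torsion-free has `B`
torsion-free (AT2). -/
def AlmostTorsion (tors free : Set (ModuleCat.{u} R)) (F₀ : ModuleCat.{u} R) : Prop :=
  Nontrivial F₀ ∧
  (∀ N : Submodule R F₀, N ≠ ⊥ → ModuleCat.of R (F₀ ⧸ N) ∈ tors) ∧
  (∀ (A B : ModuleCat.{u} R) (i : F₀ ⟶ A) (p : A ⟶ B) (w : i ≫ p = 0),
    (ShortComplex.mk i p w).ShortExact → A ∈ free → B ∈ free)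

/-- An injective envelope: an essential monomorphism into an injective object. -/
def IsInjectiveEnvelope {C : Type*} [Category C] {S E : C} (i : S ⟶ E) : Prop :=
  Injective E ∧ Mono i ∧ ∀ ⦃Z : C⦄ (g : E ⟶ Z), Mono (i ≫ g) → Mono g

/-! If `M₁ ∩ M₂ = 0`, the map `M₁ → F₀/M₂` is injective, so under AT1 and heredity `M₁` is
torsion; being also a submodule of the torsion-free `F₀`, it vanishes. Uniformity passes to
`E(F₀)` because `F₀ ⊆ E(F₀)` is essential, and a uniform module has no nontrivial direct
summands. -/

theorem _root_.Submodule.injective_mkQ_comp_subtype_of_disjoint {M : Type*} [AddCommGroup M]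
    [Module R M] {p q : Submodule R M} (h : Disjoint p q) :
    Function.Injective (q.mkQ ∘ₗ p.subtype) := by
  rw [← LinearMap.ker_eq_bot, LinearMap.ker_comp, Submodule.ker_mkQ,
    ← Submodule.disjoint_iff_comap_eq_bot]
  exact h

def IsUniform (R : Type u) [Ring R] (M : Type*) [AddCommGroup M] [Module R M] : Prop :=
  ∀ M₁ M₂ : Submodule R M, M₁ ≠ ⊥ → M₂ ≠ ⊥ → M₁ ⊓ M₂ ≠ ⊥

theorem IsUniform.eq_bot_or_eq_bot_of_isCompl {M : Type*} [AddCommGroup M] [Module R M]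
    (hM : IsUniform R M) {M₁ M₂ : Submodule R M} (h : IsCompl M₁ M₂) :
    M₁ = ⊥ ∨ M₂ = ⊥ := by
  by_contra! hne
  exact hM M₁ M₂ hne.1 hne.2 h.inf_eq_bot

namespace TorsionPair

def IsHereditary (τ : TorsionPair R) : Prop :=
  ∀ {X Y : ModuleCat.{u} R}, X ∈ τ.tors → ∀ f : Y ⟶ X, Mono f → Y ∈ τ.tors

theorem eq_bot_of_mem_tors (τ : TorsionPair R) {F : ModuleCat.{u} R} (hF : F ∈ τ.free)
    {N : Submodule R F} (hN : ModuleCat.of R N ∈ τ.tors) : N = ⊥ := by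
  have hzero : N.subtype = 0 :=
    congrArg ModuleCat.Hom.hom (τ.hom_vanish hN hF (ModuleCat.ofHom N.subtype))
  rw [← N.range_subtype, hzero, LinearMap.range_zero]

theorem isUniform_of_forall_quotient_mem_tors (τ : TorsionPair R) (hher : τ.IsHereditary)
    {F : ModuleCat.{u} R} (hF : F ∈ τ.free)
    (hquot : ∀ N : Submodule R F, N ≠ ⊥ → ModuleCat.of R (F ⧸ N) ∈ τ.tors) :
    IsUniform R F := by
  intro M₁ M₂ h₁ h₂ hinf
  have hmono : Mono (ModuleCat.ofHom (M₂.mkQ ∘ₗ M₁.subtype)) :=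
    (ModuleCat.mono_iff_injective _).2
      (Submodule.injective_mkQ_comp_subtype_of_disjoint (disjoint_iff.2 hinf))
  exact h₁ (τ.eq_bot_of_mem_tors hF (hher (hquot M₂ h₂) _ hmono))

end TorsionPair

section EssentialMono

variable {F E : ModuleCat.{u} R} {i : F ⟶ E}

theorem eq_bot_of_comap_eq_bot_of_essential
    (hess : ∀ ⦃Z : ModuleCat.{u} R⦄ (g : E ⟶ Z), Mono (i ≫ g) → Mono g)
    {M : Submodule R E} (hM : M.comap i.hom = ⊥) : M = ⊥ := by
  have hmono : Mono (i ≫ ModuleCat.ofHom M.mkQ) := by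
    rw [ModuleCat.mono_iff_ker_eq_bot, ModuleCat.hom_comp, ModuleCat.hom_ofHom,
      LinearMap.ker_comp, Submodule.ker_mkQ, hM]
  have := (ModuleCat.mono_iff_ker_eq_bot _).1 (hess _ hmono)
  rwa [ModuleCat.hom_ofHom, Submodule.ker_mkQ] at this

theorem IsUniform.of_essential (hF : IsUniform R F) (hmono : Mono i)
    (hess : ∀ ⦃Z : ModuleCat.{u} R⦄ (g : E ⟶ Z), Mono (i ≫ g) → Mono g) :
    IsUniform R E := by
  intro M₁ M₂ h₁ h₂ hinf
  refine hF _ _ (mt (eq_bot_of_comap_eq_bot_of_essential hess) h₁)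
    (mt (eq_bot_of_comap_eq_bot_of_essential hess) h₂) ?_
  rw [← Submodule.comap_inf, hinf, ← LinearMap.ker, ← ModuleCat.mono_iff_ker_eq_bot]
  exact hmono

end EssentialMono

theorem hereditary_almostTorsion_uniform (τ : TorsionPair R)
    (hher : ∀ {X Y : ModuleCat.{u} R}, X ∈ τ.tors → ∀ f : Y ⟶ X, Mono f → Y ∈ τ.tors)
    (F₀ : ModuleCat.{u} R) (hF₀ : F₀ ∈ τ.free)
    (hat : AlmostTorsion τ.tors τ.free F₀) :
    (∀ M₁ M₂ : Submodule R F₀, M₁ ≠ ⊥ → M₂ ≠ ⊥ → M₁ ⊓ M₂ ≠ ⊥) ∧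
    (∀ (E : ModuleCat.{u} R) (i : F₀ ⟶ E), IsInjectiveEnvelope i →
      ∀ M₁ M₂ : Submodule R E, IsCompl M₁ M₂ → M₁ = ⊥ ∨ M₂ = ⊥) := by
  have huniform : IsUniform R F₀ :=
    τ.isUniform_of_forall_quotient_mem_tors hher hF₀ hat.2.1
  refine ⟨huniform, fun E i ⟨_, hmono, hess⟩ _ _ hcompl => ?_⟩
  exact (huniform.of_essential hmono hess).eq_bot_or_eq_bot_of_isCompl hcompl

end Paper
end
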